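/- arXiv:1612.00830 — 2 statements merged into one kernel-verified Lean document; each statement's English description precedes it below -/
import Mathlib

section
/- Let θ, a, b be real numbers with 0 < θ < 1 and a, b > 0, and set g(α) = a^{1-θ} · α^θ + b^{1-θ} · (1-α)^θ. Then there exists β₀ with 0 < β₀ < 1 such that g is strictly decreasing on the interval [1-β₀, 1]; consequently, for every α ∈ [1-β₀, 1], if g(α) ≤ a^{1-θ} then α = 1. -/
/-- For `0 < θ < 1` and `a, b > 0`, with
`g(α) = a^(1-θ) * α^θ + b^(1-θ) * (1-α)^θ`, there is `β₀ ∈ (0,1)` such that `g`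
is strictly decreasing on `[1-β₀, 1]`; hence for `α ∈ [1-β₀, 1]`,
`g(α) ≤ a^(1-θ)` forces `α = 1`. -/
theorem concentration_bound_strictAnti (θ a b : ℝ)
    (hθ0 : 0 < θ) (hθ1 : θ < 1) (ha : 0 < a) (hb : 0 < b) :
    ∃ β₀ : ℝ, 0 < β₀ ∧ β₀ < 1 ∧
      StrictAntiOn (fun α : ℝ => a ^ (1 - θ) * α ^ θ + b ^ (1 - θ) * (1 - α) ^ θ)
        (Set.Icc (1 - β₀) 1) ∧
      ∀ α ∈ Set.Icc (1 - β₀) 1,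
        a ^ (1 - θ) * α ^ θ + b ^ (1 - θ) * (1 - α) ^ θ ≤ a ^ (1 - θ) → α = 1 := by
  set c : ℝ := min (1/2) (b/(2*a)) with hc
  have hc0 : 0 < c := lt_min (by norm_num) (by positivity)
  have hchalf : c ≤ 1/2 := min_le_left _ _
  have hcb : c ≤ b/(2*a) := min_le_right _ _
  have hc1 : c < 1 := lt_of_le_of_lt hchalf (by norm_num)
  set g : ℝ → ℝ := fun α : ℝ => a ^ (1 - θ) * α ^ θ + b ^ (1 - θ) * (1 - α) ^ θ with hg
  have hcont : Continuous g := by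
    apply Continuous.add
    · exact continuous_const.mul (continuous_id.rpow_const fun x => Or.inr hθ0.le)
    · exact continuous_const.mul
        ((continuous_const.sub continuous_id).rpow_const fun x => Or.inr hθ0.le)
  have hanti : StrictAntiOn g (Set.Icc (1 - c) 1) := by
    apply strictAntiOn_of_deriv_neg (convex_Icc _ _) hcont.continuousOn
    intro x hx
    rw [interior_Icc] at hx
    have hx0 : (0:ℝ) < x := by
      have : (1:ℝ)/2 ≤ 1 - c := by linarith
      linarith [hx.1]
    have h1x : 0 < 1 - x := by linarith [hx.2]
    have hd1 : HasDerivAt (fun α : ℝ => α ^ θ) (θ * x ^ (θ - 1)) x :=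
      Real.hasDerivAt_rpow_const (Or.inl hx0.ne')
    have hd2 : HasDerivAt (fun α : ℝ => (1 - α) ^ θ) (θ * (1 - x) ^ (θ - 1) * (-1)) x := by
      exact (Real.hasDerivAt_rpow_const (x := 1 - x) (p := θ) (Or.inl h1x.ne')).comp x
        ((hasDerivAt_id x).const_sub 1)
    have hd : HasDerivAt g
        (a ^ (1 - θ) * (θ * x ^ (θ - 1)) + b ^ (1 - θ) * (θ * (1 - x) ^ (θ - 1) * (-1))) x :=
      (hd1.const_mul _).add (hd2.const_mul _)
    rw [hd.deriv]
    have key : a ^ (1 - θ) * x ^ (θ - 1) < b ^ (1 - θ) * (1 - x) ^ (θ - 1) := by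
      have hθn : θ - 1 < 0 := by linarith
      -- upper bound for the first term
      have h1 : x ^ (θ - 1) ≤ ((1:ℝ)/2) ^ (θ - 1) := by
        apply Real.rpow_le_rpow_of_nonpos (by norm_num)
        · linarith [hx.1]
        · linarith
      have h2 : a ^ (1 - θ) * x ^ (θ - 1) ≤ (2*a) ^ (1 - θ) := by
        have : ((1:ℝ)/2) ^ (θ - 1) = (2:ℝ) ^ (1 - θ) := by
          rw [one_div, Real.inv_rpow (by norm_num), ← Real.rpow_neg (by norm_num)]
          ring_nf
        calc a ^ (1 - θ) * x ^ (θ - 1) ≤ a ^ (1 - θ) * ((1:ℝ)/2) ^ (θ - 1) := by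
              apply mul_le_mul_of_nonneg_left h1 (Real.rpow_nonneg ha.le _)
          _ = (2*a) ^ (1 - θ) := by
              rw [this, Real.mul_rpow (by norm_num) ha.le]; ring
      -- lower bound for the second term
      have h3 : (2*a) ^ (1 - θ) = b ^ (1 - θ) * (b/(2*a)) ^ (θ - 1) := by
        rw [Real.div_rpow hb.le (by positivity), ← mul_div_assoc,
          eq_div_iff (Real.rpow_pos_of_pos (by positivity : (0:ℝ) < 2*a) _).ne',
          ← Real.rpow_add (by positivity : (0:ℝ) < 2*a), ← Real.rpow_add hb]
        norm_num
      have h4 : (b/(2*a)) ^ (θ - 1) ≤ c ^ (θ - 1) :=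
        Real.rpow_le_rpow_of_nonpos hc0 hcb hθn.le
      have h5 : c ^ (θ - 1) < (1 - x) ^ (θ - 1) :=
        Real.rpow_lt_rpow_of_neg h1x (by linarith [hx.1]) hθn
      calc a ^ (1 - θ) * x ^ (θ - 1) ≤ (2*a) ^ (1 - θ) := h2
        _ = b ^ (1 - θ) * (b/(2*a)) ^ (θ - 1) := h3
        _ ≤ b ^ (1 - θ) * c ^ (θ - 1) :=
            mul_le_mul_of_nonneg_left h4 (Real.rpow_nonneg hb.le _)
        _ < b ^ (1 - θ) * (1 - x) ^ (θ - 1) :=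
            (mul_lt_mul_iff_right₀ (Real.rpow_pos_of_pos hb _)).2 h5
    nlinarith
  refine ⟨c, hc0, hc1, hanti, ?_⟩
  intro α hα hle
  by_contra hne
  have hα1 : α < 1 := lt_of_le_of_ne hα.2 hne
  have h1mem : (1:ℝ) ∈ Set.Icc (1 - c) 1 := ⟨by linarith, le_refl _⟩
  have := hanti hα h1mem hα1
  have hg1 : g 1 = a ^ (1 - θ) := by
    simp [hg, Real.one_rpow, Real.zero_rpow hθ0.ne']
  rw [hg1] at this
  exact absurd hle (not_le.2 this)
end

section
/- Fix integers k ≥ 3 and l ≥ 1. For x ∈ ℂ^l define the orbit set O_{k,l}(x) = { (ζ₁ · x_{σ(1)}, …, ζ_l · x_{σ(l)}) : ζ₁, …, ζ_l ∈ ℂ with ζ_i^k = 1, σ a permutation of {1, …, l} }. If x ∈ ℂ^l is nonzero and O_{k,l}(x) has cardinality exactly k · l, then exactly one coordinate of x is nonzero. -/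
/-!
Let `s` be the number of nonzero coordinates of `x` and `a` one of them. For every position `i`,
the `k ^ s` vectors `v` with `v ^ k = x ^ k ∘ swap a i` (coordinatewise) lie in the orbit and are
nonzero at `i`, while no element of the orbit has more than `s` nonzero coordinates. Double
counting the pairs (position, orbit element nonzero there) gives `l * k ^ s ≤ s * #O`. Since
`s * k < k ^ s` once `s ≥ 2` and `k ≥ 3`, an orbit of size `k * l` forces `s = 1`.
-/

open Finset Polynomial

theorem exists_pow_eq_one_mul_of_pow_eq_pow {K : Type*} [Field K] {n : ℕ} (hn : n ≠ 0)
    {a b : K} (h : a ^ n = b ^ n) : ∃ ζ : K, ζ ^ n = 1 ∧ a = ζ * b := by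
  rcases eq_or_ne b 0 with rfl | hb
  · rw [zero_pow hn, pow_eq_zero_iff hn] at h
    exact ⟨1, one_pow n, by rw [h, mul_zero]⟩
  · exact ⟨a / b, by rw [div_pow, h, div_self (pow_ne_zero n hb)], (div_mul_cancel₀ a hb).symm⟩

theorem Complex.card_nthRootsFinset {n : ℕ} (hn : n ≠ 0) (a : ℂ) :
    #(nthRootsFinset n a) = if a = 0 then 1 else n := by
  split_ifs with ha
  · subst ha
    rw [card_eq_one]
    exact ⟨0, by ext z; simp [mem_nthRootsFinset (Nat.pos_of_ne_zero hn), hn]⟩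
  · have hζ := Complex.isPrimitiveRoot_exp n hn
    classical
    rw [nthRootsFinset_def, Multiset.toFinset_card_of_nodup (hζ.nthRoots_nodup ha),
      hζ.card_nthRoots, if_pos (IsAlgClosed.exists_pow_nat_eq a (Nat.pos_of_ne_zero hn))]

theorem card_piFinset_nthRootsFinset {ι : Type*} [Fintype ι] [DecidableEq ι] {n : ℕ}
    (hn : n ≠ 0) (w : ι → ℂ) :
    #(Fintype.piFinset fun i => nthRootsFinset n (w i)) = n ^ #{i | w i ≠ 0} := by
  simp [Fintype.card_piFinset, Complex.card_nthRootsFinset hn, prod_ite]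

theorem Nat.mul_lt_pow_of_three_le {k s : ℕ} (hk : 3 ≤ k) (hs : 2 ≤ s) : s * k < k ^ s := by
  induction s, hs using Nat.le_induction with
  | base => nlinarith
  | succ s hs ih =>
    calc (s + 1) * k = s * k + k := by ring
      _ < k ^ s + k ^ s := Nat.add_lt_add_of_lt_of_le ih (Nat.le_self_pow (by omega) k)
      _ ≤ k ^ s * k := by rw [← mul_two]; exact Nat.mul_le_mul_left _ (by omega)
      _ = k ^ (s + 1) := (pow_succ k s).symm

/-- The orbit `O_{k,l}(x)` of `x` under the monomial group `μ_k ≀ Sym ι`. -/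
def rootsOfUnityPermOrbit {ι M : Type*} [Monoid M] (k : ℕ) (x : ι → M) : Set (ι → M) :=
  {v | ∃ (ζ : ι → M) (σ : Equiv.Perm ι), (∀ i, ζ i ^ k = 1) ∧ ∀ i, v i = ζ i * x (σ i)}

theorem pow_preimage_subset_rootsOfUnityPermOrbit {ι K : Type*} [Field K] {k : ℕ} (hk : k ≠ 0)
    (x : ι → K) (σ : Equiv.Perm ι) :
    {v | ∀ i, v i ^ k = x (σ i) ^ k} ⊆ rootsOfUnityPermOrbit k x := by
  intro v hv
  choose ζ hζ hv using fun i => exists_pow_eq_one_mul_of_pow_eq_pow hk (hv i)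
  exact ⟨ζ, σ, hζ, hv⟩

theorem card_ne_zero_le_of_mem_rootsOfUnityPermOrbit {ι M : Type*} [Fintype ι]
    [MonoidWithZero M] [DecidableEq M] {k : ℕ} {x v : ι → M} (hv : v ∈ rootsOfUnityPermOrbit k x) :
    #{i | v i ≠ 0} ≤ #{i | x i ≠ 0} := by
  obtain ⟨ζ, σ, -, hv⟩ := hv
  calc #{i | v i ≠ 0} ≤ #{i | x (σ i) ≠ 0} :=
        card_le_card <| monotone_filter_right _ fun i _ hi => by
          rw [hv i] at hi; exact right_ne_zero_of_mul hi
    _ = #{i | x i ≠ 0} := card_equiv σ (by simp)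

theorem rootsOfUnityPermOrbit_finite {ι K : Type*} [Fintype ι] [DecidableEq ι] [Field K] {k : ℕ}
    (hk : k ≠ 0) (x : ι → K) :
    (rootsOfUnityPermOrbit k x).Finite := by
  classical
  refine (Fintype.piFinset fun _ => univ.biUnion fun j =>
    nthRootsFinset k (x j ^ k)).finite_toSet.subset ?_
  rintro v ⟨ζ, σ, hζ, hv⟩
  rw [mem_coe, Fintype.mem_piFinset]
  exact fun i => mem_biUnion.mpr ⟨σ i, mem_univ _, by
    rw [mem_nthRootsFinset (Nat.pos_of_ne_zero hk), hv i, mul_pow, hζ i, one_mul]⟩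

theorem card_mul_pow_le_ncard_rootsOfUnityPermOrbit_mul {ι : Type*} [Fintype ι] [DecidableEq ι]
    {k : ℕ} (hk : k ≠ 0) {x : ι → ℂ} {a : ι} (ha : x a ≠ 0) :
    Fintype.card ι * k ^ #{i | x i ≠ 0} ≤
      (rootsOfUnityPermOrbit k x).ncard * #{i | x i ≠ 0} := by
  have hO := rootsOfUnityPermOrbit_finite hk x
  rw [Set.ncard_eq_toFinset_card _ hO, ← card_univ]
  refine card_mul_le_card_mul (fun i v => v i ≠ 0) (fun i _ => ?_) (fun v hv => ?_)
  · set F := Fintype.piFinset fun j => nthRootsFinset k (x (Equiv.swap a i j) ^ k)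
    calc k ^ #{i | x i ≠ 0} = #F := by
          rw [card_piFinset_nthRootsFinset hk]
          exact congrArg (k ^ ·) (card_equiv (Equiv.swap a i) (by simp [hk]))
      _ ≤ _ := card_le_card fun v hv => by
          simp only [F, Fintype.mem_piFinset, mem_nthRootsFinset (Nat.pos_of_ne_zero hk)] at hv
          refine mem_filter.mpr ⟨hO.mem_toFinset.mpr
            (pow_preimage_subset_rootsOfUnityPermOrbit hk x _ hv), fun h0 => ?_⟩
          simpa [h0, zero_pow hk, eq_comm, hk, ha] using hv i
  · exact card_ne_zero_le_of_mem_rootsOfUnityPermOrbit (hO.mem_toFinset.mp hv)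

theorem minimal_orbit_unique_nonzero_coord_general (k l : ℕ) (hk : 3 ≤ k)
    (x : Fin l → ℂ) (hx : x ≠ 0)
    (hcard : ({v | ∃ (ζ : Fin l → ℂ) (σ : Equiv.Perm (Fin l)),
        (∀ i, ζ i ^ k = 1) ∧ ∀ i, v i = ζ i * x (σ i)} : Set (Fin l → ℂ)).ncard = k * l) :
    ∃! i : Fin l, x i ≠ 0 := by
  obtain ⟨a, ha⟩ := Function.ne_iff.mp hx
  have hcount := card_mul_pow_le_ncard_rootsOfUnityPermOrbit_mul (k := k) (by omega) ha
  rw [rootsOfUnityPermOrbit, hcard, Fintype.card_fin] at hcount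
  have hpos : 0 < #{i | x i ≠ 0} := card_pos.mpr ⟨a, by simpa using ha⟩
  rcases (by omega : #{i | x i ≠ 0} = 1 ∨ 2 ≤ #{i | x i ≠ 0}) with hone | htwo
  · simpa using card_eq_one_iff_existsUnique.mp hone
  · have hlt := Nat.mul_lt_mul_of_pos_left (Nat.mul_lt_pow_of_three_le hk htwo) a.pos
    linarith

/-- For `k ≥ 3`, `l ≥ 1`: if `x ∈ ℂ^l` is nonzero and its orbit under the group
generated by rotations of each coordinate by `k`-th roots of unity and by permutations
of the coordinates has cardinality exactly `k · l`, then exactly one coordinate of `x`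
is nonzero. -/
theorem minimal_orbit_unique_nonzero_coord (k l : ℕ) (hk : 3 ≤ k) (hl : 1 ≤ l)
    (x : Fin l → ℂ) (hx : x ≠ 0)
    (hcard : ({v | ∃ (ζ : Fin l → ℂ) (σ : Equiv.Perm (Fin l)),
        (∀ i, ζ i ^ k = 1) ∧ ∀ i, v i = ζ i * x (σ i)} : Set (Fin l → ℂ)).ncard = k * l) :
    ∃! i : Fin l, x i ≠ 0 :=
  minimal_orbit_unique_nonzero_coord_general k l hk x hx hcard
end
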